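/- There exists S ∈ ℕ, independent of N, such that for every N ∈ ℕ with Zeckendorf representation N = ∑_{j=1}^m F_{n_j} and every 1 ≤ j ≤ m with n_j ≥ S, the ratio (Ā_{n_j}(ε_j) · C̄_{n_j}(ε_j)) / (A_{n_j} · C_{n_j}) is strictly greater than 5/12, where ε_j = −∑_{s=j+1}^m (−φ)^{n_s}. -/

import Mathlib

open Real Finset

/-- The fractional part of the golden ratio. -/
noncomputable def goldenφ : ℝ := (Real.sqrt 5 - 1) / 2

/-- `s_{nt} = 2 sin π( t/F_n − φ^n ({t F_{n−1}/F_n} − 1/2) )`. -/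
noncomputable def sval (n t : ℕ) : ℝ :=
  2 * Real.sin (π * ((t : ℝ) / (Nat.fib n : ℝ) -
    goldenφ ^ n * (Int.fract ((t : ℝ) * (Nat.fib (n - 1) : ℝ) / (Nat.fib n : ℝ)) - 1 / 2)))

/-- `v_n(ε) = 2 sin π((−φ)^n/2 − ε)`. -/
noncomputable def vval (n : ℕ) (ε : ℝ) : ℝ :=
  2 * Real.sin (π * ((-goldenφ) ^ n / 2 - ε))

/-- Product `∏_{t=1}^{(q−1)/2} f t`, where when `q` is even the final factor (at `t = q/2`)
is taken with exponent `1/2`. -/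
noncomputable def halfProd (f : ℕ → ℝ) (q : ℕ) : ℝ :=
  (∏ t ∈ Finset.Icc 1 ((q - 1) / 2), f t) * (if Even q then Real.sqrt (f (q / 2)) else 1)

/-- `A_n = |2 F_n sin(π φ^n)|`. -/
noncomputable def Aval (n : ℕ) : ℝ := |2 * (Nat.fib n : ℝ) * Real.sin (π * goldenφ ^ n)|

/-- `Ā_n(ε) = 2 F_n |sin π((−φ)^n − ε)|`. -/
noncomputable def Abar (n : ℕ) (ε : ℝ) : ℝ :=
  2 * (Nat.fib n : ℝ) * |Real.sin (π * ((-goldenφ) ^ n - ε))|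

/-- `C_n = ∏_{t=1}^{(F_n−1)/2} (1 − s_{n0}²/s_{nt}²)`. -/
noncomputable def Cval (n : ℕ) : ℝ :=
  halfProd (fun t => 1 - (sval n 0) ^ 2 / (sval n t) ^ 2) (Nat.fib n)

/-- `C̄_n(ε) = ∏_{t=1}^{(F_n−1)/2} (1 − v_n(ε)²/s_{nt}²)`. -/
noncomputable def Cbar (n : ℕ) (ε : ℝ) : ℝ :=
  halfProd (fun t => 1 - (vval n ε) ^ 2 / (sval n t) ^ 2) (Nat.fib n)

lemma sqrt5_lb : (2.2360679:ℝ) < Real.sqrt 5 := by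
  have h := Real.sq_sqrt (by norm_num : (0:ℝ) ≤ 5)
  have h0 := Real.sqrt_nonneg 5
  nlinarith

lemma sqrt5_ub : Real.sqrt 5 < 2.2360680 := by
  have h := Real.sq_sqrt (by norm_num : (0:ℝ) ≤ 5)
  have h0 := Real.sqrt_nonneg 5
  nlinarith

lemma gp_lb : (0.618:ℝ) < goldenφ := by
  have := sqrt5_lb; unfold goldenφ; linarith

lemma gp_ub : goldenφ < 0.61804 := by
  have := sqrt5_ub; unfold goldenφ; linarith

lemma gp_pos : 0 < goldenφ := lt_trans (by norm_num) gp_lb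

lemma gp_lt_one : goldenφ < 1 := lt_trans gp_ub (by norm_num)

lemma gp_sq : goldenφ ^ 2 = 1 - goldenφ := by
  have h := Real.sq_sqrt (by norm_num : (0:ℝ) ≤ 5)
  unfold goldenφ; nlinarith

lemma gp_pow_le {a b : ℕ} (h : a ≤ b) : goldenφ ^ b ≤ goldenφ ^ a :=
  pow_le_pow_of_le_one gp_pos.le gp_lt_one.le h

lemma gp_pow_pos (a : ℕ) : 0 < goldenφ ^ a := pow_pos gp_pos a

lemma gp_pow30 : goldenφ ^ 30 ≤ 1e-6 := by
  calc goldenφ ^ 30 ≤ 0.61804 ^ 30 := by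
        exact pow_le_pow_left₀ gp_pos.le gp_ub.le 30
    _ ≤ 1e-6 := by norm_num

lemma gp_pow60 : goldenφ ^ 60 ≤ 1e-12 := by
  have : goldenφ ^ 60 = (goldenφ ^ 30) ^ 2 := by ring
  rw [this]
  calc (goldenφ ^ 30) ^ 2 ≤ (1e-6) ^ 2 :=
        pow_le_pow_left₀ (gp_pow_pos 30).le gp_pow30 2
    _ ≤ 1e-12 := by norm_num

/-- key identity `φ^{M} + φ^{M+1} = φ^{M-1}` -/
lemma gp_sum_id (M : ℕ) (hM : 1 ≤ M) :
    goldenφ ^ M + goldenφ ^ (M + 1) = goldenφ ^ (M - 1) := by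
  obtain ⟨M', rfl⟩ : ∃ M', M = M' + 1 := ⟨M - 1, by omega⟩
  have h2 := gp_sq
  simp only [Nat.add_sub_cancel]
  have : goldenφ ^ (M' + 1) + goldenφ ^ (M' + 1 + 1)
      = goldenφ ^ M' * (goldenφ + goldenφ ^ 2) := by ring
  rw [this, h2]; ring

open goldenRatio in
lemma gp_fib (n : ℕ) :
    goldenφ ^ n * (Nat.fib n : ℝ) = (1 - (-(goldenφ ^ 2)) ^ n) / Real.sqrt 5 := by
  have hc : goldenConj = -goldenφ := by
    unfold goldenφ; rw [goldenConj]; ring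
  have hg : goldenφ * goldenRatio = 1 := by
    have := goldenRatio_mul_goldenConj
    rw [hc] at this
    nlinarith
  rw [Real.coe_fib_eq n, hc]
  have key : goldenφ ^ n * (goldenRatio ^ n - (-goldenφ) ^ n)
      = 1 - (-(goldenφ ^ 2)) ^ n := by
    rw [mul_sub, ← mul_pow, hg, one_pow, ← mul_pow]; ring_nf
  calc goldenφ ^ n * ((goldenRatio ^ n - (-goldenφ) ^ n) / Real.sqrt 5)
      = goldenφ ^ n * (goldenRatio ^ n - (-goldenφ) ^ n) / Real.sqrt 5 := by ring
    _ = _ := by rw [key]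
open Real Finset

lemma xq_bounds {n : ℕ} (hn : 30 ≤ n) :
    0.4472 ≤ goldenφ ^ n * (Nat.fib n : ℝ) ∧ goldenφ ^ n * (Nat.fib n : ℝ) ≤ 0.44722 := by
  have hid := gp_fib n
  have habs : |(-(goldenφ ^ 2)) ^ n| ≤ 1e-12 := by
    rw [abs_pow, abs_neg, abs_of_pos (gp_pow_pos 2), ← pow_mul]
    calc goldenφ ^ (2 * n) ≤ goldenφ ^ 60 := gp_pow_le (by omega)
      _ ≤ 1e-12 := gp_pow60
  have h1 := abs_le.mp habs
  have h5l := sqrt5_lb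
  have h5u := sqrt5_ub
  have h5p : (0:ℝ) < Real.sqrt 5 := by linarith
  rw [hid]
  constructor
  · rw [le_div_iff₀ h5p]; nlinarith
  · rw [div_le_iff₀ h5p]; nlinarith

lemma fib_ge {n : ℕ} (hn : 30 ≤ n) : (832040 : ℝ) ≤ (Nat.fib n : ℝ) := by
  have h : Nat.fib 30 ≤ Nat.fib n := Nat.fib_mono hn
  have h30 : Nat.fib 30 = 832040 := by rfl
  rw [h30] at h
  exact_mod_cast h

/-- monotonicity of `sin (π α)` relative to distance from `{0,1}` -/
lemma sin_pi_ge {β α : ℝ} (h0 : 0 < β) (h1 : β ≤ α) (h2 : α ≤ 1 - β) :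
    Real.sin (π * β) ≤ Real.sin (π * α) := by
  have hpi := Real.pi_pos
  have hb2 : β ≤ 1 / 2 := by linarith
  rcases le_or_gt α (1 / 2) with h | h
  · apply Real.strictMonoOn_sin.monotoneOn
    · constructor <;> nlinarith
    · constructor <;> nlinarith
    · nlinarith
  · rw [show π * α = π - π * (1 - α) by ring, Real.sin_pi_sub]
    apply Real.strictMonoOn_sin.monotoneOn
    · constructor <;> nlinarith
    · constructor <;> nlinarith
    · nlinarith

/-- bound `1/sin² θ ≤ 1/θ² + 2.5` on `(0, π/2]`. -/
lemma one_div_sin_sq {θ : ℝ} (h0 : 0 < θ) (h2 : θ ≤ π / 2) :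
    1 / (Real.sin θ) ^ 2 ≤ 1 / θ ^ 2 + 2.5 := by
  have hpi := Real.pi_lt_d2
  have hsp : 0 < Real.sin θ := Real.sin_pos_of_pos_of_lt_pi h0 (by nlinarith [Real.pi_gt_three])
  rcases le_or_gt θ 1 with h1 | h1
  · have hc : θ - θ ^ 3 / 4 < Real.sin θ := by
      have := Real.sin_gt_sub_cube h0; linarith [pow_pos h0 3]
    have h3 : θ ^ 3 ≤ θ := by
      calc θ ^ 3 ≤ θ ^ 1 := pow_le_pow_of_le_one h0.le h1 (by norm_num)
        _ = θ := pow_one θ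
    have hcp : 0 < θ - θ ^ 3 / 4 := by nlinarith
    have step1 : 1 / (Real.sin θ) ^ 2 ≤ 1 / (θ - θ ^ 3 / 4) ^ 2 := by
      apply one_div_le_one_div_of_le (by positivity)
      nlinarith
    have step2 : 1 / (θ - θ ^ 3 / 4) ^ 2 ≤ 1 / θ ^ 2 + 2.5 := by
      rw [div_le_iff₀ (by positivity)]
      have expand : (1 / θ ^ 2 + 2.5) * (θ - θ ^ 3 / 4) ^ 2
          = (1 + 2.5 * θ ^ 2) * (1 - θ ^ 2 / 4) ^ 2 := by
        field_simp
      have hw1 : θ ^ 2 ≤ 1 := by nlinarith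
      have hw0 : 0 < θ ^ 2 := by positivity
      nlinarith [mul_nonneg hw0.le (sub_nonneg.mpr hw1), mul_nonneg (mul_nonneg hw0.le hw0.le) hw0.le]
    linarith
  · have hms := Real.mul_le_sin h0.le h2
    have hθp : (0:ℝ) < θ ^ 2 := by positivity
    have h2p : 0 < 2 / π * θ := by positivity
    have : (2 / π * θ) ^ 2 ≤ (Real.sin θ) ^ 2 := by nlinarith
    have hstep : 1 / (Real.sin θ) ^ 2 ≤ π ^ 2 / (4 * θ ^ 2) := by
      rw [div_le_div_iff₀ (by positivity) (by positivity)]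
      have hπ : (0:ℝ) < π := Real.pi_pos
      calc 1 * (4 * θ ^ 2) = π ^ 2 * (2 / π * θ) ^ 2 := by field_simp; ring
        _ ≤ π ^ 2 * Real.sin θ ^ 2 := by nlinarith
    have : π ^ 2 / (4 * θ ^ 2) ≤ 1 / θ ^ 2 + 2.5 := by
      rw [div_le_iff₀ (by positivity)]
      have h1θ : 1 ≤ θ ^ 2 := by nlinarith
      have : (1 / θ ^ 2 + 2.5) * (4 * θ ^ 2) = 4 + 10 * θ ^ 2 := by field_simp; ring
      rw [this]; nlinarith
    linarith

/-- `∏ (1 - g t) ≥ 1 - ∑ g t` for nonnegative `g` with small sum. -/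
lemma prod_one_sub_ge (s : Finset ℕ) (g : ℕ → ℝ) (h0 : ∀ t ∈ s, 0 ≤ g t)
    (h1 : ∑ t ∈ s, g t ≤ 1) : 1 - ∑ t ∈ s, g t ≤ ∏ t ∈ s, (1 - g t) := by
  induction s using Finset.cons_induction with
  | empty => simp
  | cons a s ha ih =>
    rw [Finset.sum_cons] at h1 ⊢
    rw [Finset.prod_cons]
    have hga : 0 ≤ g a := h0 a (Finset.mem_cons_self a s)
    have h0' : ∀ t ∈ s, 0 ≤ g t := fun t ht => h0 t (Finset.mem_cons_of_mem ht)
    have hsum_nonneg : 0 ≤ ∑ t ∈ s, g t := Finset.sum_nonneg h0'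
    have h1' : ∑ t ∈ s, g t ≤ 1 := by linarith
    have ih' := ih h0' h1'
    have hga1 : g a ≤ 1 := by linarith
    nlinarith [Finset.prod_nonneg (fun t ht => by nlinarith [h0' t ht, Finset.single_le_sum h0' ht] : ∀ t ∈ s, (0:ℝ) ≤ 1 - g t)]
/-- partial sums of `1/(t-0.224)²` are bounded by 2.4425. -/
lemma Sd_bound (T : ℕ) : ∑ t ∈ Finset.Icc 1 T, 1 / ((t:ℝ) - 0.224) ^ 2 ≤ 2.4425 := by
  have hnn : ∀ t : ℕ, (0:ℝ) ≤ 1 / ((t:ℝ) - 0.224) ^ 2 := fun t => by positivity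
  have key : ∀ T : ℕ, 4 ≤ T →
      ∑ t ∈ Finset.Icc 1 T, 1 / ((t:ℝ) - 0.224) ^ 2 ≤ 2.4425 - 1 / ((T:ℝ) - 0.224) := by
    intro T hT
    induction T, hT using Nat.le_induction with
    | base =>
      rw [show (4:ℕ) = 3 + 1 by norm_num, Finset.sum_Icc_succ_top (by norm_num),
        show (3:ℕ) = 2 + 1 by norm_num, Finset.sum_Icc_succ_top (by norm_num),
        show (2:ℕ) = 1 + 1 by norm_num, Finset.sum_Icc_succ_top (by norm_num),
        Finset.Icc_self, Finset.sum_singleton]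
      norm_num
    | succ T hT ih =>
      rw [Finset.sum_Icc_succ_top (by omega)]
      have hT4 : (4:ℝ) ≤ (T:ℝ) := by exact_mod_cast hT
      have h1 : (0:ℝ) < (T:ℝ) - 0.224 := by linarith
      have h2 : (0:ℝ) < (T:ℝ) + 0.776 := by linarith
      have hcast : ((T+1 : ℕ):ℝ) = (T:ℝ) + 1 := by push_cast; ring
      rw [hcast]
      have htel : 1 / ((T:ℝ) + 1 - 0.224) ^ 2 ≤ 1 / ((T:ℝ) - 0.224) - 1 / ((T:ℝ) + 1 - 0.224) := by
        rw [show (T:ℝ) + 1 - 0.224 = (T:ℝ) + 0.776 by ring,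
          div_sub_div _ _ (ne_of_gt h1) (ne_of_gt h2),
          div_le_div_iff₀ (by positivity) (by positivity)]
        nlinarith
      have := ih
      rw [show (T:ℝ) + 1 - 0.224 = (T:ℝ) + 0.776 by ring] at htel ⊢
      linarith
  rcases le_or_gt 4 T with h | h
  · have := key T h
    have h4T : (4:ℝ) ≤ (T:ℝ) := by exact_mod_cast h
    have hpos : (0:ℝ) < 1 / ((T:ℝ) - 0.224) := one_div_pos.mpr (by linarith)
    linarith
  · have step1 : ∑ t ∈ Finset.Icc 1 T, 1 / ((t:ℝ) - 0.224) ^ 2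
        ≤ ∑ t ∈ Finset.Icc 1 (4:ℕ), 1 / ((t:ℝ) - 0.224) ^ 2 := by
      apply Finset.sum_le_sum_of_subset_of_nonneg
      · apply Finset.Icc_subset_Icc_right; omega
      · intro t _ _; exact hnn t
    have step2 := key 4 le_rfl
    have h4 : ((4:ℕ):ℝ) = 4 := by norm_num
    rw [h4] at step2
    have hpos2 : (0:ℝ) < 1 / (4 - 0.224) := by norm_num
    linarith

lemma halfProd_mem_le {q t : ℕ} (ht : t ∈ Finset.Icc 1 ((q - 1) / 2)) : 1 ≤ t ∧ 2 * t ≤ q := by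
  rw [Finset.mem_Icc] at ht
  omega

lemma halfProd_le_one {f : ℕ → ℝ} {q : ℕ} (hq2 : 2 ≤ q)
    (h : ∀ t, 1 ≤ t → 2 * t ≤ q → 0 ≤ f t ∧ f t ≤ 1) : halfProd f q ≤ 1 := by
  unfold halfProd
  have hp1 : ∏ t ∈ Finset.Icc 1 ((q - 1) / 2), f t ≤ 1 := by
    apply Finset.prod_le_one
    · intro t ht; exact (h t (halfProd_mem_le ht).1 (halfProd_mem_le ht).2).1
    · intro t ht; exact (h t (halfProd_mem_le ht).1 (halfProd_mem_le ht).2).2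
  have hp0 : 0 ≤ ∏ t ∈ Finset.Icc 1 ((q - 1) / 2), f t :=
    Finset.prod_nonneg fun t ht => (h t (halfProd_mem_le ht).1 (halfProd_mem_le ht).2).1
  by_cases hq : Even q
  · rw [if_pos hq]
    have hv : q / 2 ≥ 1 := by omega
    have hdvd : 2 * (q / 2) ≤ q := by omega
    have hs : Real.sqrt (f (q / 2)) ≤ 1 := by
      rw [show (1:ℝ) = Real.sqrt 1 by simp]
      exact Real.sqrt_le_sqrt (by simpa using (h (q/2) hv hdvd).2)
    nlinarith [Real.sqrt_nonneg (f (q / 2))]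
  · rw [if_neg hq]; simpa using hp1

lemma halfProd_pos {f : ℕ → ℝ} {q : ℕ}
    (h : ∀ t, 1 ≤ t → 2 * t ≤ q → 0 < f t) (hq2 : 2 ≤ q) : 0 < halfProd f q := by
  unfold halfProd
  have hp : 0 < ∏ t ∈ Finset.Icc 1 ((q - 1) / 2), f t :=
    Finset.prod_pos fun t ht => h t (halfProd_mem_le ht).1 (halfProd_mem_le ht).2
  by_cases hq : Even q
  · rw [if_pos hq]
    have : 0 < Real.sqrt (f (q / 2)) :=
      Real.sqrt_pos.mpr (h (q/2) (by omega) (by rcases hq with ⟨k,hk⟩; omega))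
    positivity
  · rw [if_neg hq]; simpa using hp

lemma halfProd_ge {g : ℕ → ℝ} {q : ℕ} (hq2 : 2 ≤ q)
    (h0 : ∀ t, 1 ≤ t → 2 * t ≤ q → 0 ≤ g t)
    (h1 : ∑ t ∈ Finset.Icc 1 (q / 2), g t ≤ 1) :
    1 - ∑ t ∈ Finset.Icc 1 (q / 2), g t ≤ halfProd (fun t => 1 - g t) q := by
  have hmem : ∀ t ∈ Finset.Icc 1 (q / 2), 0 ≤ g t := by
    intro t ht; rw [Finset.mem_Icc] at ht; exact h0 t ht.1 (by omega)
  unfold halfProd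
  by_cases hq : Even q
  · rw [if_pos hq]
    obtain ⟨k', hk⟩ : ∃ k', q = (k' + 1) + (k' + 1) := by
      rcases hq with ⟨k, hk⟩; exact ⟨k - 1, by omega⟩
    set k := k' + 1 with hkdef
    have hq2' : q / 2 = k := by omega
    have hq1' : (q - 1) / 2 = k' := by omega
    have hsplit : ∑ t ∈ Finset.Icc 1 (q / 2), g t
        = (∑ t ∈ Finset.Icc 1 k', g t) + g k := by
      rw [hq2', hkdef, Finset.sum_Icc_succ_top (by omega)]
    have hsub : Finset.Icc 1 k' ⊆ Finset.Icc 1 (q/2) := by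
      apply Finset.Icc_subset_Icc_right; omega
    have hS1nn : 0 ≤ ∑ t ∈ Finset.Icc 1 k', g t :=
      Finset.sum_nonneg fun t ht => hmem t (hsub ht)
    have hgk : 0 ≤ g k := h0 k (by omega) (by omega)
    have hgk1 : g k ≤ 1 := by rw [hsplit] at h1; linarith
    have hS1 : ∑ t ∈ Finset.Icc 1 k', g t ≤ 1 := by rw [hsplit] at h1; linarith
    have hprod : 1 - ∑ t ∈ Finset.Icc 1 k', g t ≤ ∏ t ∈ Finset.Icc 1 k', (1 - g t) :=
      prod_one_sub_ge _ _ (fun t ht => hmem t (hsub ht)) hS1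
    have hsqrt : 1 - g k ≤ Real.sqrt (1 - g k) := by
      nlinarith [Real.sq_sqrt (by linarith : (0:ℝ) ≤ 1 - g k),
        Real.sqrt_nonneg (1 - g k)]
    have hsqnn : 0 ≤ Real.sqrt (1 - g k) := Real.sqrt_nonneg _
    have hPnn : (0:ℝ) ≤ 1 - ∑ t ∈ Finset.Icc 1 k', g t := by
      rw [hsplit] at h1; linarith
    rw [hq2'] at hsplit
    rw [hq1', hq2', hsplit]
    calc 1 - ((∑ t ∈ Finset.Icc 1 k', g t) + g k)
        ≤ (1 - ∑ t ∈ Finset.Icc 1 k', g t) * (1 - g k) := by nlinarith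
      _ ≤ (∏ t ∈ Finset.Icc 1 k', (1 - g t)) * Real.sqrt (1 - g k) := by
          apply mul_le_mul hprod hsqrt (by linarith) (le_trans hPnn hprod)
  · rw [if_neg hq]
    rw [Nat.even_iff] at hq
    have hqq : (q - 1) / 2 = q / 2 := by omega
    rw [hqq, mul_one]
    exact prod_one_sub_ge _ _ hmem h1
noncomputable def Bp (k : ℕ) : ℝ := if Even k then goldenφ ^ (k - 1) else goldenφ ^ k
noncomputable def Bm (k : ℕ) : ℝ := if Even k then goldenφ ^ k else goldenφ ^ (k - 1)

lemma Bp_nonneg (k : ℕ) : 0 ≤ Bp k := by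
  unfold Bp; split <;> exact (gp_pow_pos _).le

lemma Bm_nonneg (k : ℕ) : 0 ≤ Bm k := by
  unfold Bm; split <;> exact (gp_pow_pos _).le

lemma single_bounds {k M : ℕ} (h1 : 1 ≤ k) (hkM : k ≤ M) :
    (-goldenφ) ^ M ≤ Bp k ∧ -Bm k ≤ (-goldenφ) ^ M := by
  rcases Nat.even_or_odd M with hM | hM
  · have hMp : (-goldenφ) ^ M = goldenφ ^ M := hM.neg_pow goldenφ
    rw [hMp]
    constructor
    · unfold Bp; rcases Nat.even_or_odd k with hk | hk
      · rw [if_pos hk]; exact le_trans (gp_pow_le hkM) (gp_pow_le (by omega))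
      · rw [if_neg (Nat.not_even_iff_odd.mpr hk)]
        have : k + 1 ≤ M := by
          rcases hM with ⟨a, ha⟩; rcases hk with ⟨b, hb⟩; omega
        exact le_trans (gp_pow_le this) (gp_pow_le (by omega))
    · have := gp_pow_pos M
      have := Bm_nonneg k
      linarith
  · have hMp : (-goldenφ) ^ M = -(goldenφ ^ M) := hM.neg_pow goldenφ
    rw [hMp]
    constructor
    · have := gp_pow_pos M
      have := Bp_nonneg k
      linarith
    · unfold Bm; rcases Nat.even_or_odd k with hk | hk
      · rw [if_pos hk]
        have : k + 1 ≤ M := by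
          rcases hM with ⟨a, ha⟩; rcases hk with ⟨b, hb⟩; omega
        have := le_trans (gp_pow_le this) (gp_pow_le (by omega : k ≤ k + 1))
        linarith
      · rw [if_neg (Nat.not_even_iff_odd.mpr hk)]
        have := le_trans (gp_pow_le hkM) (gp_pow_le (by omega : k - 1 ≤ k))
        linarith

lemma Tub (ℓ : ℕ) : ∀ (a : ℕ) (n : ℕ → ℕ) (k : ℕ), 1 ≤ k → k ≤ n a →
    (∀ s, a ≤ s → s < a + ℓ → n s + 2 ≤ n (s + 1)) →
    (∑ s ∈ Finset.Icc a (a + ℓ), (-goldenφ) ^ (n s)) ≤ Bp k ∧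
      -Bm k ≤ ∑ s ∈ Finset.Icc a (a + ℓ), (-goldenφ) ^ (n s) := by
  induction ℓ with
  | zero =>
    intro a n k hk1 hka _
    simp only [Nat.add_zero, Finset.Icc_self, Finset.sum_singleton]
    exact single_bounds hk1 hka
  | succ ℓ ih =>
    intro a n k hk1 hka hgap
    have hsplit : ∑ s ∈ Finset.Icc a (a + (ℓ + 1)), (-goldenφ) ^ (n s)
        = (-goldenφ) ^ (n a) + ∑ s ∈ Finset.Icc (a + 1) (a + 1 + ℓ), (-goldenφ) ^ (n s) := by
      have hset : Finset.Icc a (a + (ℓ + 1)) = insert a (Finset.Icc (a+1) (a+1+ℓ)) := by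
        rw [show a + 1 + ℓ = a + (ℓ + 1) by omega, Finset.Icc_add_one_left_eq_Ioc,
          Finset.Ioc_insert_left (by omega)]
      rw [hset, Finset.sum_insert (by simp)]
    set M := n a with hM
    have hM1 : 1 ≤ M := le_trans hk1 hka
    have hstep : M + 2 ≤ n (a + 1) := hgap a le_rfl (by omega)
    have hrest := ih (a + 1) n (M + 2) (by omega) hstep
      (fun s hs hs' => hgap s (by omega) (by omega))
    rw [hsplit]
    obtain ⟨hub, hlb⟩ := hrest
    have hid := gp_sum_id M hM1
    rcases Nat.even_or_odd M with hMe | hMo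
    · have hMp : (-goldenφ) ^ M = goldenφ ^ M := hMe.neg_pow goldenφ
      have hBp : Bp (M + 2) = goldenφ ^ (M + 1) := by
        unfold Bp; rw [if_pos (by rcases hMe with ⟨b,hb⟩; exact ⟨b+1, by omega⟩)]
        norm_num
      have hBm : Bm (M + 2) = goldenφ ^ (M + 2) := by
        unfold Bm; rw [if_pos (by rcases hMe with ⟨b,hb⟩; exact ⟨b+1, by omega⟩)]
      rw [hBp] at hub; rw [hBm] at hlb
      constructor
      · -- upper: φ^M + rest ≤ φ^{M-1} ≤ Bp k
        have h1 : (-goldenφ) ^ M + ∑ s ∈ Finset.Icc (a+1) (a+1+ℓ), (-goldenφ) ^ (n s)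
            ≤ goldenφ ^ (M - 1) := by rw [hMp]; linarith
        have h2 : goldenφ ^ (M - 1) ≤ Bp k := by
          unfold Bp; rcases Nat.even_or_odd k with hk | hk
          · rw [if_pos hk]; exact gp_pow_le (by omega)
          · rw [if_neg (Nat.not_even_iff_odd.mpr hk)]
            have hkM : k + 1 ≤ M := by
              rcases hMe with ⟨b, hb⟩; rcases hk with ⟨c, hc⟩; omega
            exact gp_pow_le (by omega)
        linarith
      · -- lower: φ^M - φ^{M+2} ≥ 0 ≥ -Bm k
        have hp2 : goldenφ ^ (M + 2) ≤ goldenφ ^ M := gp_pow_le (by omega)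
        have := Bm_nonneg k
        rw [hMp]; linarith
    · have hMp : (-goldenφ) ^ M = -(goldenφ ^ M) := hMo.neg_pow goldenφ
      have hodd2 : Odd (M + 2) := by rcases hMo with ⟨b, hb⟩; exact ⟨b+1, by omega⟩
      have hBp : Bp (M + 2) = goldenφ ^ (M + 2) := by
        unfold Bp; rw [if_neg (Nat.not_even_iff_odd.mpr hodd2)]
      have hBm : Bm (M + 2) = goldenφ ^ (M + 1) := by
        unfold Bm; rw [if_neg (Nat.not_even_iff_odd.mpr hodd2)]
        norm_num
      rw [hBp] at hub; rw [hBm] at hlb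
      constructor
      · have hp2 : goldenφ ^ (M + 2) ≤ goldenφ ^ M := gp_pow_le (by omega)
        have := Bp_nonneg k
        rw [hMp]; linarith
      · -- lower: -(φ^M + φ^{M+1}) = -φ^{M-1} ≥ -Bm k
        have h2 : goldenφ ^ (M - 1) ≤ Bm k := by
          unfold Bm; rcases Nat.even_or_odd k with hk | hk
          · rw [if_pos hk]
            have hkM : k + 1 ≤ M := by
              rcases hMo with ⟨b, hb⟩; rcases hk with ⟨c, hc⟩; omega
            exact gp_pow_le (by omega)
          · rw [if_neg (Nat.not_even_iff_odd.mpr hk)]; exact gp_pow_le (by omega)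
        rw [hMp]; linarith

/-- bounds on `ε_j` coming from the Zeckendorf gap condition. -/
lemma eps_bounds (m : ℕ) (n : ℕ → ℕ) (j : ℕ) (hj1 : 1 ≤ j) (hjm : j ≤ m)
    (hgap : ∀ s, 1 ≤ s → s ≤ m - 1 → n s + 2 ≤ n (s + 1)) :
    -goldenφ ^ (n j + 1) ≤ (-1:ℝ) ^ (n j) * (-(∑ s ∈ Finset.Icc (j+1) m, (-goldenφ) ^ (n s))) ∧
      (-1:ℝ) ^ (n j) * (-(∑ s ∈ Finset.Icc (j+1) m, (-goldenφ) ^ (n s))) ≤ goldenφ ^ (n j + 2) := by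
  rcases le_or_gt (j + 1) m with hle | hlt
  · -- nonempty tail
    have hTub := Tub (m - (j+1)) (j+1) n (n j + 2) (by omega)
      (hgap j hj1 (by omega))
      (fun s hs hs' => hgap s (by omega) (by omega))
    rw [show j + 1 + (m - (j+1)) = m by omega] at hTub
    obtain ⟨hub, hlb⟩ := hTub
    set T := ∑ s ∈ Finset.Icc (j+1) m, (-goldenφ) ^ (n s) with hT
    rcases Nat.even_or_odd (n j) with he | ho
    · have h1 : (-1:ℝ) ^ (n j) = 1 := he.neg_one_pow
      have hBp : Bp (n j + 2) = goldenφ ^ (n j + 1) := by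
        unfold Bp; rw [if_pos (by rcases he with ⟨b,hb⟩; exact ⟨b+1, by omega⟩)]
        norm_num
      have hBm : Bm (n j + 2) = goldenφ ^ (n j + 2) := by
        unfold Bm; rw [if_pos (by rcases he with ⟨b,hb⟩; exact ⟨b+1, by omega⟩)]
      have hub' : T ≤ goldenφ ^ (n j + 1) := by rwa [hBp] at hub
      have hlb' : -goldenφ ^ (n j + 2) ≤ T := by rw [hBm] at hlb; linarith
      rw [h1, one_mul]
      constructor <;> linarith
    · have h1 : (-1:ℝ) ^ (n j) = -1 := ho.neg_one_pow
      have hodd2 : Odd (n j + 2) := by rcases ho with ⟨b, hb⟩; exact ⟨b+1, by omega⟩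
      have hBp : Bp (n j + 2) = goldenφ ^ (n j + 2) := by
        unfold Bp; rw [if_neg (Nat.not_even_iff_odd.mpr hodd2)]
      have hBm : Bm (n j + 2) = goldenφ ^ (n j + 1) := by
        unfold Bm; rw [if_neg (Nat.not_even_iff_odd.mpr hodd2)]
        norm_num
      have hub' : T ≤ goldenφ ^ (n j + 2) := by rwa [hBp] at hub
      have hlb' : -goldenφ ^ (n j + 1) ≤ T := by rw [hBm] at hlb; linarith
      rw [h1, neg_one_mul, neg_neg]
      constructor <;> linarith
  · -- empty tail
    have hempty : Finset.Icc (j+1) m = ∅ := by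
      apply Finset.Icc_eq_empty; omega
    rw [hempty]
    simp only [Finset.sum_empty, neg_zero, mul_zero]
    constructor
    · have := gp_pow_pos (n j + 1); linarith
    · have := gp_pow_pos (n j + 2); linarith
lemma sval_zero (n : ℕ) (hn : 30 ≤ n) :
    0 < sval n 0 ∧ sval n 0 ≤ π * goldenφ ^ n ∧ sval n 0 ≤ 1.409 / (Nat.fib n : ℝ) := by
  have hx : 0 < goldenφ ^ n := gp_pow_pos n
  have hxs : goldenφ ^ n ≤ 1e-6 := le_trans (gp_pow_le hn) gp_pow30
  have hQ : (832040:ℝ) ≤ (Nat.fib n : ℝ) := fib_ge hn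
  have hQ0 : (0:ℝ) < (Nat.fib n : ℝ) := by linarith
  have hxQ2 := (xq_bounds hn).2
  have hπu : π < 3.15 := Real.pi_lt_d2
  have hπl : (3.14:ℝ) < π := Real.pi_gt_d2
  have hs0eq : sval n 0 = 2 * Real.sin (π * (goldenφ ^ n / 2)) := by
    unfold sval
    norm_num [Int.fract_zero]
    ring_nf
  rw [hs0eq]
  have harg0 : 0 < π * (goldenφ ^ n / 2) := by positivity
  have hargπ : π * (goldenφ ^ n / 2) < π := by nlinarith
  have hspos : 0 < Real.sin (π * (goldenφ ^ n / 2)) :=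
    Real.sin_pos_of_pos_of_lt_pi harg0 hargπ
  have hsle : Real.sin (π * (goldenφ ^ n / 2)) ≤ π * (goldenφ ^ n / 2) :=
    Real.sin_le harg0.le
  refine ⟨by linarith, by linarith, ?_⟩
  have h2 : π * goldenφ ^ n ≤ 1.409 / (Nat.fib n : ℝ) := by
    rw [le_div_iff₀ hQ0]
    calc π * goldenφ ^ n * (Nat.fib n : ℝ) = π * (goldenφ ^ n * (Nat.fib n : ℝ)) := by ring
      _ ≤ 3.15 * 0.44722 := by
          apply mul_le_mul hπu.le hxQ2 (by positivity) (by norm_num)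
      _ ≤ 1.409 := by norm_num
  linarith

lemma sval_bounds_aux {Q t α : ℝ} (hQ0 : 0 < Q) (ht1 : 1 ≤ t) (ht2 : 2 * t ≤ Q)
    (hα1 : (t - 0.224)/Q ≤ α) (hα2 : α ≤ 1 - (t - 0.224)/Q) :
    3.104 / Q ≤ 2 * Real.sin (π * α) ∧
    1 / (2 * Real.sin (π * α)) ^ 2 ≤ Q ^ 2 / (4 * π ^ 2 * (t - 0.224) ^ 2) + 0.625 := by
  have hπl : (3.14:ℝ) < π := Real.pi_gt_d2
  have hπu : π < 3.15 := Real.pi_lt_d2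
  have hπ0 : 0 < π := by linarith
  set β := (t - 0.224) / Q with hβ
  have hβ0 : 0 < β := div_pos (by linarith) hQ0
  have hβh : β ≤ 1/2 := by
    rw [hβ, div_le_iff₀ hQ0]; nlinarith
  have hsin : Real.sin (π * β) ≤ Real.sin (π * α) := sin_pi_ge hβ0 hα1 hα2
  have hβπ2 : π * β ≤ π / 2 := by nlinarith
  have hms := Real.mul_le_sin (by positivity : (0:ℝ) ≤ π * β) hβπ2
  have h2β : 2 * β ≤ Real.sin (π * β) := by
    have he : 2 / π * (π * β) = 2 * β := by field_simp
    linarith [he ▸ hms]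
  have hsβpos : 0 < Real.sin (π * β) := by linarith
  constructor
  · have h34 : 3.104 / Q ≤ 4 * β := by
      rw [hβ, show 4 * ((t - 0.224)/Q) = (4*(t - 0.224))/Q by ring]
      exact (div_le_div_iff_of_pos_right hQ0).mpr (by linarith)
    linarith
  · have hsq : (2 * Real.sin (π * β))^2 ≤ (2 * Real.sin (π * α))^2 := by nlinarith
    have step1 : 1 / (2 * Real.sin (π * α))^2 ≤ 1 / (2 * Real.sin (π * β))^2 :=
      one_div_le_one_div_of_le (by positivity) hsq
    have hods := one_div_sin_sq (show 0 < π * β by positivity) hβπ2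
    have e2 : 1 / (2 * Real.sin (π * β))^2 = (1/4) * (1 / (Real.sin (π * β))^2) := by
      rw [mul_pow]; ring
    have ht024 : t - 0.224 ≠ 0 := by norm_num; intro h; nlinarith
    have e4 : (1/4) * (1 / (π * β)^2 + 2.5) = Q^2/(4*π^2*(t - 0.224)^2) + 0.625 := by
      rw [hβ]
      have hQne : Q ≠ 0 := ne_of_gt hQ0
      have hπne : π ≠ 0 := ne_of_gt hπ0
      field_simp
      ring
    have step2 : 1 / (2 * Real.sin (π * β))^2 ≤ Q^2/(4*π^2*(t - 0.224)^2) + 0.625 := by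
      rw [e2, ← e4]
      have : (1/4) * (1 / (Real.sin (π * β))^2) ≤ (1/4) * (1 / (π * β)^2 + 2.5) := by linarith
      linarith
    linarith

lemma sval_bounds (n : ℕ) (hn : 30 ≤ n) (t : ℕ) (ht1 : 1 ≤ t) (ht2 : 2 * t ≤ Nat.fib n) :
    3.104 / (Nat.fib n : ℝ) ≤ sval n t ∧
    1 / (sval n t) ^ 2 ≤ (Nat.fib n : ℝ) ^ 2 / (4 * π ^ 2 * ((t:ℝ) - 0.224) ^ 2) + 0.625 := by
  have hx : 0 < goldenφ ^ n := gp_pow_pos n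
  have hQ : (832040:ℝ) ≤ (Nat.fib n : ℝ) := fib_ge hn
  have hQ0 : (0:ℝ) < (Nat.fib n : ℝ) := by linarith
  have htR1 : (1:ℝ) ≤ (t:ℝ) := by exact_mod_cast ht1
  have htR2 : 2 * (t:ℝ) ≤ (Nat.fib n : ℝ) := by exact_mod_cast ht2
  have hxQ2 : goldenφ ^ n * (Nat.fib n : ℝ) ≤ 0.44722 := (xq_bounds hn).2
  have hseq : sval n t = 2 * Real.sin (π * ((t:ℝ)/(Nat.fib n : ℝ) -
      goldenφ ^ n * (Int.fract ((t:ℝ) * (Nat.fib (n-1) : ℝ)/(Nat.fib n : ℝ)) - 1/2))) := rfl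
  set F := Int.fract ((t:ℝ) * (Nat.fib (n-1) : ℝ)/(Nat.fib n : ℝ)) with hF
  have hF0 : 0 ≤ F := Int.fract_nonneg _
  have hF1 : F < 1 := Int.fract_lt_one _
  have hd : goldenφ ^ n / 2 ≤ 0.224 / (Nat.fib n : ℝ) := by
    rw [div_le_div_iff₀ (by norm_num) hQ0]
    nlinarith
  have hmul1 : goldenφ ^ n * (F - 1/2) ≤ goldenφ ^ n / 2 := by nlinarith
  have hmul2 : -(goldenφ ^ n / 2) ≤ goldenφ ^ n * (F - 1/2) := by nlinarith
  have e1 : ((t:ℝ) - 0.224)/(Nat.fib n : ℝ) = (t:ℝ)/(Nat.fib n : ℝ) - 0.224/(Nat.fib n : ℝ) := by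
    ring
  have h2tQ : 2*(t:ℝ)/(Nat.fib n : ℝ) ≤ 1 := by
    rw [div_le_one hQ0]; linarith
  have hα1 : ((t:ℝ) - 0.224)/(Nat.fib n : ℝ)
      ≤ (t:ℝ)/(Nat.fib n : ℝ) - goldenφ ^ n * (F - 1/2) := by
    rw [e1]; linarith
  have hα2 : (t:ℝ)/(Nat.fib n : ℝ) - goldenφ ^ n * (F - 1/2)
      ≤ 1 - ((t:ℝ) - 0.224)/(Nat.fib n : ℝ) := by
    rw [e1]
    have h2 : (t:ℝ)/(Nat.fib n : ℝ) + (t:ℝ)/(Nat.fib n : ℝ) = 2*(t:ℝ)/(Nat.fib n : ℝ) := by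
      ring
    linarith
  rw [hseq]
  exact sval_bounds_aux hQ0 htR1 htR2 hα1 hα2
set_option maxHeartbeats 1000000 in
lemma main_ineq (n : ℕ) (hn : 30 ≤ n) (ε : ℝ)
    (hlo : -goldenφ ^ (n + 1) ≤ (-1:ℝ) ^ n * ε)
    (hhi : (-1:ℝ) ^ n * ε ≤ goldenφ ^ (n + 2)) :
    5 / 12 < Abar n ε * Cbar n ε / (Aval n * Cval n) := by
  have hgl := gp_lb
  have hgu := gp_ub
  have hsq := gp_sq
  have hx : 0 < goldenφ ^ n := gp_pow_pos n
  have hxs : goldenφ ^ n ≤ 1e-6 := le_trans (gp_pow_le hn) gp_pow30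
  have hQ : (832040:ℝ) ≤ (Nat.fib n : ℝ) := fib_ge hn
  have hQ0 : (0:ℝ) < (Nat.fib n : ℝ) := by linarith
  have hq2 : 2 ≤ Nat.fib n := by
    have h2' : (2:ℝ) ≤ (Nat.fib n : ℝ) := by linarith
    exact_mod_cast h2'
  obtain ⟨hxQ1, hxQ2⟩ := xq_bounds hn
  have hπl : (3.14:ℝ) < π := Real.pi_gt_d2
  have hπu : π < 3.15 := Real.pi_lt_d2
  have hπ0 : (0:ℝ) < π := by linarith
  have hπne : π ≠ 0 := ne_of_gt hπ0
  have hp1 : goldenφ ^ (n+1) = goldenφ ^ n * goldenφ := pow_succ goldenφ n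
  have hp2 : goldenφ ^ (n+2) = goldenφ ^ n * goldenφ ^ 2 := by rw [pow_add]
  -- parity analysis for u and w
  obtain ⟨U, hU0, hU1, hU2, hW, hv2⟩ :
      ∃ U : ℝ, 0 ≤ U ∧ 0.118 * goldenφ ^ n ≤ U ∧ U ≤ 1.11804 * goldenφ ^ n ∧
        |(-goldenφ) ^ n - ε| = U + goldenφ ^ n / 2 ∧
        (vval n ε) ^ 2 ≤ 4 * π ^ 2 * U ^ 2 := by
    have hveq : vval n ε = 2 * Real.sin (π * ((-goldenφ) ^ n / 2 - ε)) := rfl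
    have hvb : ∀ w : ℝ, (2 * Real.sin (π * w)) ^ 2 ≤ 4 * π ^ 2 * |w| ^ 2 := by
      intro w
      have h1 : |Real.sin (π * w)| ≤ |π * w| := Real.abs_sin_le_abs
      have h2 : (Real.sin (π * w)) ^ 2 ≤ (π * w) ^ 2 := by
        rw [← sq_abs (Real.sin (π * w)), ← sq_abs (π * w)]
        exact pow_le_pow_left₀ (abs_nonneg _) h1 2
      have h3 : (π * w) ^ 2 = π ^ 2 * |w| ^ 2 := by rw [sq_abs]; ring
      linarith only [h2, h3.le, h3.ge]
    rcases Nat.even_or_odd n with he | ho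
    · have hp : (-goldenφ) ^ n = goldenφ ^ n := he.neg_pow goldenφ
      have h1 : (-1:ℝ) ^ n = 1 := he.neg_one_pow
      rw [h1, one_mul, hp1] at hlo
      rw [h1, one_mul, hp2, hsq] at hhi
      have hb1 : goldenφ ^ n * goldenφ ≤ 0.61804 * goldenφ ^ n := by
        have := mul_le_mul_of_nonneg_left hgu.le hx.le
        linarith only [this]
      have hb2 : goldenφ ^ n * (1 - goldenφ) ≤ 0.382 * goldenφ ^ n := by
        have h1' : 1 - goldenφ ≤ 0.382 := by linarith only [hgl]
        have := mul_le_mul_of_nonneg_left h1' hx.le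
        linarith only [this]
      have hupos : 0 < goldenφ ^ n / 2 - ε := by linarith only [hhi, hb2, hx]
      refine ⟨goldenφ ^ n / 2 - ε, hupos.le,
        by linarith only [hhi, hb2, hx], by linarith only [hlo, hb1, hx], ?_, ?_⟩
      · rw [hp, abs_of_pos (by linarith only [hhi, hb2, hx] : (0:ℝ) < goldenφ ^ n - ε)]
        ring
      · rw [hveq, hp]
        have hb := hvb (goldenφ ^ n / 2 - ε)
        rwa [abs_of_pos hupos] at hb
    · have hp : (-goldenφ) ^ n = -(goldenφ ^ n) := ho.neg_pow goldenφ
      have h1 : (-1:ℝ) ^ n = -1 := ho.neg_one_pow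
      rw [h1, neg_one_mul, hp1] at hlo
      rw [h1, neg_one_mul, hp2, hsq] at hhi
      have hb1 : goldenφ ^ n * goldenφ ≤ 0.61804 * goldenφ ^ n := by
        have := mul_le_mul_of_nonneg_left hgu.le hx.le
        linarith only [this]
      have hb2 : goldenφ ^ n * (1 - goldenφ) ≤ 0.382 * goldenφ ^ n := by
        have h1' : 1 - goldenφ ≤ 0.382 := by linarith only [hgl]
        have := mul_le_mul_of_nonneg_left h1' hx.le
        linarith only [this]
      have huneg : -(goldenφ ^ n) / 2 - ε < 0 := by linarith only [hhi, hb2, hx]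
      refine ⟨-(-(goldenφ ^ n) / 2 - ε), by linarith only [huneg],
        by linarith only [hhi, hb2, hx], by linarith only [hlo, hb1, hx], ?_, ?_⟩
      · rw [hp, abs_of_neg (by linarith only [hhi, hb2, hx] : -(goldenφ ^ n) - ε < 0)]
        ring
      · rw [hveq, hp]
        have hb := hvb (-(goldenφ ^ n) / 2 - ε)
        rwa [abs_of_neg huneg] at hb
  have hW1 : 0.618 * goldenφ ^ n ≤ U + goldenφ ^ n / 2 := by linarith only [hU1]
  have hW2 : U + goldenφ ^ n / 2 ≤ 1.61804 * goldenφ ^ n := by linarith only [hU2]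
  have hWpos : 0 < U + goldenφ ^ n / 2 := by linarith only [hU0, hx]
  have hWsmall : U + goldenφ ^ n / 2 ≤ 1.61804e-6 := by
    have h1 : 1.61804 * goldenφ ^ n ≤ 1.61804 * 1e-6 := by linarith only [hxs]
    linarith only [hW2, h1]
  have hπW0 : 0 ≤ π * (U + goldenφ ^ n / 2) := mul_nonneg hπ0.le hWpos.le
  have hπWub : π * (U + goldenφ ^ n / 2) ≤ 5.1e-6 := by
    have h := mul_le_mul hπu.le hWsmall hWpos.le (by norm_num : (0:ℝ) ≤ 3.15)
    linarith only [h]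
  have hπWπ : π * (U + goldenφ ^ n / 2) ≤ π := by
    have h := mul_nonneg hπ0.le
      (sub_nonneg.mpr (by linarith only [hWsmall] : U + goldenφ ^ n / 2 ≤ 1))
    linarith only [h]
  -- Abar lower bound
  have hAbar : 2 * (Nat.fib n : ℝ) * (π * (U + goldenφ ^ n / 2)) * (1 - 1e-8)
      ≤ Abar n ε := by
    unfold Abar
    have habs : |Real.sin (π * ((-goldenφ) ^ n - ε))|
        = Real.sin (π * (U + goldenφ ^ n / 2)) := by
      rcases le_or_gt 0 ((-goldenφ) ^ n - ε) with h | h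
      · have heq : (-goldenφ) ^ n - ε = U + goldenφ ^ n / 2 := by
          rw [← hW, abs_of_nonneg h]
        rw [heq]
        exact abs_of_nonneg (Real.sin_nonneg_of_nonneg_of_le_pi hπW0 hπWπ)
      · have heq : (-goldenφ) ^ n - ε = -(U + goldenφ ^ n / 2) := by
          rw [← hW, abs_of_neg h]; ring
        rw [heq, show π * -(U + goldenφ ^ n / 2) = -(π * (U + goldenφ ^ n / 2)) by ring,
          Real.sin_neg, abs_neg]
        exact abs_of_nonneg (Real.sin_nonneg_of_nonneg_of_le_pi hπW0 hπWπ)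
    rw [habs]
    have hθ1 : π * (U + goldenφ ^ n / 2) ≤ 1 := by linarith only [hπWub]
    have hθ0 : 0 < π * (U + goldenφ ^ n / 2) := mul_pos hπ0 hWpos
    have hcube : π * (U + goldenφ ^ n / 2) - (π * (U + goldenφ ^ n / 2)) ^ 3 / 4 < Real.sin (π * (U + goldenφ ^ n / 2)) := by
      have := Real.sin_gt_sub_cube hθ0; linarith [pow_pos hθ0 3]
    have hθsq : (π * (U + goldenφ ^ n / 2)) ^ 2 ≤ 4e-8 := by
      have h := mul_self_le_mul_self hπW0 hπWub
      nlinarith only [h]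
    have hs : π * (U + goldenφ ^ n / 2) * (1 - 1e-8)
        ≤ Real.sin (π * (U + goldenφ ^ n / 2)) := by
      have h := mul_nonneg hπW0 (sub_nonneg.mpr hθsq)
      nlinarith only [hcube, h]
    have h2Q : (0:ℝ) ≤ 2 * (Nat.fib n : ℝ) := by linarith only [hQ0]
    have h := mul_le_mul_of_nonneg_left hs h2Q
    nlinarith only [h]
  have hAbar0 : 0 ≤ Abar n ε := by
    unfold Abar
    have := abs_nonneg (Real.sin (π * ((-goldenφ) ^ n - ε)))
    have h2Q : (0:ℝ) ≤ 2 * (Nat.fib n : ℝ) := by linarith only [hQ0]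
    exact mul_nonneg h2Q this
  -- Aval bounds
  have hπx0 : 0 < π * goldenφ ^ n := mul_pos hπ0 hx
  have hπxπ : π * goldenφ ^ n < π := by
    have h := mul_pos hπ0 (by linarith only [hxs] : (0:ℝ) < 1 - goldenφ ^ n)
    nlinarith only [h]
  have hsinx_pos : 0 < Real.sin (π * goldenφ ^ n) :=
    Real.sin_pos_of_pos_of_lt_pi hπx0 hπxπ
  have hprod_pos : 0 < 2 * (Nat.fib n : ℝ) * Real.sin (π * goldenφ ^ n) :=
    mul_pos (by linarith only [hQ0]) hsinx_pos
  have hAval_pos : 0 < Aval n := by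
    unfold Aval
    rw [abs_of_pos hprod_pos]
    exact hprod_pos
  have hAval : Aval n ≤ 2 * (Nat.fib n : ℝ) * (π * goldenφ ^ n) := by
    unfold Aval
    rw [abs_of_pos hprod_pos]
    have hsle := Real.sin_le hπx0.le
    have h := mul_le_mul_of_nonneg_left hsle
      (by linarith only [hQ0] : (0:ℝ) ≤ 2 * (Nat.fib n : ℝ))
    nlinarith only [h]
  -- Cval bounds
  obtain ⟨hs0pos, hs0le, hs0le'⟩ := sval_zero n hn
  have hfrac : (1.409:ℝ) / (Nat.fib n : ℝ) < 3.104 / (Nat.fib n : ℝ) :=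
    (div_lt_div_iff_of_pos_right hQ0).mpr (by norm_num)
  have hCfact : ∀ t, 1 ≤ t → 2 * t ≤ Nat.fib n →
      0 < 1 - (sval n 0) ^ 2 / (sval n t) ^ 2 ∧ 1 - (sval n 0) ^ 2 / (sval n t) ^ 2 ≤ 1 := by
    intro t ht1 ht2
    obtain ⟨hst1, _⟩ := sval_bounds n hn t ht1 ht2
    have h31 : (0:ℝ) < 3.104 / (Nat.fib n : ℝ) := div_pos (by norm_num) hQ0
    have hstpos : 0 < sval n t := lt_of_lt_of_le h31 hst1
    have hab : sval n 0 < sval n t := by linarith only [hs0le', hfrac, hst1]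
    have hlt : (sval n 0) ^ 2 < (sval n t) ^ 2 := by
      nlinarith only [hab, hs0pos, hstpos]
    constructor
    · have hd1 : (sval n 0) ^ 2 / (sval n t) ^ 2 < 1 :=
        (div_lt_one (by nlinarith only [hstpos])).mpr hlt
      linarith only [hd1]
    · have hd0 : 0 ≤ (sval n 0) ^ 2 / (sval n t) ^ 2 := by positivity
      linarith only [hd0]
  have hCval_le : Cval n ≤ 1 := by
    unfold Cval
    exact halfProd_le_one hq2 (fun t h1 h2 => ⟨(hCfact t h1 h2).1.le, (hCfact t h1 h2).2⟩)
  have hCval_pos : 0 < Cval n := by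
    unfold Cval
    exact halfProd_pos (fun t h1 h2 => (hCfact t h1 h2).1) hq2
  -- the sum G
  set G : ℝ := ∑ t ∈ Finset.Icc 1 (Nat.fib n / 2), (vval n ε) ^ 2 / (sval n t) ^ 2 with hGdef
  have hGnn : 0 ≤ G :=
    Finset.sum_nonneg fun t _ => by positivity
  have hGle : G ≤ 2.4432 * U ^ 2 * (Nat.fib n : ℝ) ^ 2 := by
    have hterm : ∀ t ∈ Finset.Icc 1 (Nat.fib n / 2),
        (vval n ε) ^ 2 / (sval n t) ^ 2
          ≤ (4 * π ^ 2 * U ^ 2) * ((Nat.fib n : ℝ) ^ 2 / (4 * π ^ 2 * ((t:ℝ) - 0.224) ^ 2)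
              + 0.625) := by
      intro t ht
      rw [Finset.mem_Icc] at ht
      have ht1 : 1 ≤ t := ht.1
      have ht2 : 2 * t ≤ Nat.fib n := by omega
      obtain ⟨hst1, hst2⟩ := sval_bounds n hn t ht1 ht2
      have hstpos : 0 < sval n t := lt_of_lt_of_le (div_pos (by norm_num) hQ0) hst1
      have e : (vval n ε) ^ 2 / (sval n t) ^ 2 = (vval n ε) ^ 2 * (1 / (sval n t) ^ 2) := by
        ring
      rw [e]
      calc (vval n ε) ^ 2 * (1 / (sval n t) ^ 2)
          ≤ (4 * π ^ 2 * U ^ 2) * (1 / (sval n t) ^ 2) :=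
            mul_le_mul_of_nonneg_right hv2 (by positivity)
        _ ≤ (4 * π ^ 2 * U ^ 2) * ((Nat.fib n : ℝ) ^ 2 / (4 * π ^ 2 * ((t:ℝ) - 0.224) ^ 2)
              + 0.625) := mul_le_mul_of_nonneg_left hst2 (by positivity)
    have hstep1 : G ≤ (4 * π ^ 2 * U ^ 2) * ∑ t ∈ Finset.Icc 1 (Nat.fib n / 2),
        ((Nat.fib n : ℝ) ^ 2 / (4 * π ^ 2 * ((t:ℝ) - 0.224) ^ 2) + 0.625) := by
      rw [Finset.mul_sum]
      exact Finset.sum_le_sum hterm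
    have hsplit : ∑ t ∈ Finset.Icc 1 (Nat.fib n / 2),
        ((Nat.fib n : ℝ) ^ 2 / (4 * π ^ 2 * ((t:ℝ) - 0.224) ^ 2) + 0.625)
        = ((Nat.fib n : ℝ) ^ 2 / (4 * π ^ 2)) * (∑ t ∈ Finset.Icc 1 (Nat.fib n / 2),
            1 / ((t:ℝ) - 0.224) ^ 2) + 0.625 * ((Nat.fib n / 2 : ℕ) : ℝ) := by
      rw [Finset.sum_add_distrib, Finset.sum_const, Finset.mul_sum]
      congr 1
      · apply Finset.sum_congr rfl
        intro t ht
        rw [Finset.mem_Icc] at ht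
        have h1 : (1:ℝ) ≤ (t:ℝ) := by exact_mod_cast ht.1
        have hne : ((t:ℝ) - 0.224) ≠ 0 := ne_of_gt (by linarith only [h1])
        field_simp
        all_goals ring
      · rw [Nat.card_Icc]
        simp [mul_comm]
    have hSd := Sd_bound (Nat.fib n / 2)
    have hcard : ((Nat.fib n / 2 : ℕ) : ℝ) ≤ (Nat.fib n : ℝ) / 2 := by
      have := Nat.cast_div_le (m := Nat.fib n) (n := 2) (α := ℝ)
      simpa using this
    have hQsq : (0:ℝ) < (Nat.fib n : ℝ) ^ 2 / (4 * π ^ 2) :=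
      div_pos (pow_pos hQ0 2) (by positivity)
    have hstep2 : ∑ t ∈ Finset.Icc 1 (Nat.fib n / 2),
        ((Nat.fib n : ℝ) ^ 2 / (4 * π ^ 2 * ((t:ℝ) - 0.224) ^ 2) + 0.625)
        ≤ ((Nat.fib n : ℝ) ^ 2 / (4 * π ^ 2)) * 2.4425 + 0.625 * ((Nat.fib n : ℝ) / 2) := by
      rw [hsplit]
      have h1 := mul_le_mul_of_nonneg_left hSd hQsq.le
      linarith only [h1, hcard]
    have hmid : G ≤ (4 * π ^ 2 * U ^ 2) * (((Nat.fib n : ℝ) ^ 2 / (4 * π ^ 2)) * 2.4425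
        + 0.625 * ((Nat.fib n : ℝ) / 2)) := by
      refine le_trans hstep1 (mul_le_mul_of_nonneg_left hstep2 (by positivity))
    have heq : (4 * π ^ 2 * U ^ 2) * (((Nat.fib n : ℝ) ^ 2 / (4 * π ^ 2)) * 2.4425
        + 0.625 * ((Nat.fib n : ℝ) / 2))
        = 2.4425 * U ^ 2 * (Nat.fib n : ℝ) ^ 2
          + 1.25 * π ^ 2 * U ^ 2 * (Nat.fib n : ℝ) := by
      field_simp
      ring
    have hπsq : π ^ 2 ≤ 9.9225 := by nlinarith only [hπu, hπl]
    have hA : 1.25 * π ^ 2 * U ^ 2 * (Nat.fib n : ℝ)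
        ≤ 12.41 * U ^ 2 * (Nat.fib n : ℝ) := by
      have h := mul_nonneg (mul_nonneg (sub_nonneg.mpr hπsq) (sq_nonneg U)) hQ0.le
      nlinarith only [h]
    have hB : 12.41 * U ^ 2 * (Nat.fib n : ℝ)
        ≤ 0.0007 * U ^ 2 * (Nat.fib n : ℝ) ^ 2 := by
      have h := mul_nonneg (mul_nonneg (sq_nonneg U) hQ0.le)
        (by linarith only [hQ] : (0:ℝ) ≤ 0.0007 * (Nat.fib n : ℝ) - 12.41)
      nlinarith only [h]
    linarith only [hmid, heq.le, heq.ge, hA, hB]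
  -- numeric bound on G
  have hUQnn : 0 ≤ U * (Nat.fib n : ℝ) := mul_nonneg hU0 hQ0.le
  have hUQle : U * (Nat.fib n : ℝ) ≤ 0.500013 := by
    have h1 := mul_le_mul_of_nonneg_right hU2 hQ0.le
    have h2 : 1.11804 * (goldenφ ^ n * (Nat.fib n : ℝ)) ≤ 1.11804 * 0.44722 := by
      linarith only [hxQ2]
    nlinarith only [h1, h2]
  have hGub : G ≤ 0.611 := by
    have h2 := mul_self_le_mul_self hUQnn hUQle
    nlinarith only [hGle, h2]
  have hc' : (0:ℝ) ≤ 1 - G := by linarith only [hGub]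
  -- Cbar lower bound
  have hCbar : 1 - G ≤ Cbar n ε := by
    unfold Cbar
    rw [hGdef]
    apply halfProd_ge hq2
    · intro t ht1 ht2
      positivity
    · rw [← hGdef]; linarith only [hGub]
  -- core scalar inequality
  have h3 : 5 / 12 * goldenφ ^ n
      < (U + goldenφ ^ n / 2) * ((1 - 1e-8) * (1 - G)) := by
    rcases le_or_gt U (0.7 * goldenφ ^ n) with hcs | hcs
    · have hUQ : U * (Nat.fib n : ℝ) ≤ 0.313054 := by
        have h1 := mul_le_mul_of_nonneg_right hcs hQ0.le
        have h2 : 0.7 * (goldenφ ^ n * (Nat.fib n : ℝ)) ≤ 0.7 * 0.44722 := by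
          linarith only [hxQ2]
        nlinarith only [h1, h2]
      have hG1 : G ≤ 0.2395 := by
        have h2 := mul_self_le_mul_self hUQnn hUQ
        nlinarith only [hGle, h2]
      have hfac : (0.76042:ℝ) ≤ (1 - 1e-8) * (1 - G) := by
        nlinarith only [hG1, hGnn]
      have hmul := mul_le_mul hW1 hfac (by norm_num) hWpos.le
      nlinarith only [hmul, hx]
    · have hfac : (0.38899:ℝ) ≤ (1 - 1e-8) * (1 - G) := by
        nlinarith only [hGub, hGnn]
      have hW12 : 1.2 * goldenφ ^ n ≤ U + goldenφ ^ n / 2 := by linarith only [hcs]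
      have hmul := mul_le_mul hW12 hfac (by norm_num) hWpos.le
      nlinarith only [hmul, hx]
  -- assembly
  rw [lt_div_iff₀ (mul_pos hAval_pos hCval_pos)]
  have h1 : 5 / 12 * (Aval n * Cval n)
      ≤ 5 / 12 * (2 * (Nat.fib n : ℝ) * (π * goldenφ ^ n)) := by
    have ha := mul_le_of_le_one_right hAval_pos.le hCval_le
    linarith only [ha, hAval]
  have h2 : 2 * (Nat.fib n : ℝ) * (π * (U + goldenφ ^ n / 2)) * (1 - 1e-8) * (1 - G)
      ≤ Abar n ε * Cbar n ε := by
    have hm := mul_le_mul hAbar hCbar hc' hAbar0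
    nlinarith only [hm]
  have h3' := mul_lt_mul_of_pos_left h3
    (show (0:ℝ) < 2 * (Nat.fib n : ℝ) * π from mul_pos (by linarith only [hQ0]) hπ0)
  nlinarith only [h1, h2, h3']

/-- There exists `S ∈ ℕ`, independent of `N`, such that for every `N ∈ ℕ` with Zeckendorf
representation `N = ∑_{j=1}^m F_{n_j}` and every `1 ≤ j ≤ m` with `n_j ≥ S`, the ratio
`(Ā_{n_j}(ε_j) · C̄_{n_j}(ε_j)) / (A_{n_j} · C_{n_j})` is strictly greater than `5/12`,
where `ε_j = −∑_{s=j+1}^m (−φ)^{n_s}`. -/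
theorem ratio_gt_five_twelfths :
    ∃ S : ℕ,
      ∀ (N m : ℕ) (n : ℕ → ℕ), 1 ≤ m → 2 ≤ n 1 →
        (∀ j, 1 ≤ j → j ≤ m - 1 → n j + 2 ≤ n (j + 1)) →
        N = ∑ j ∈ Finset.Icc 1 m, Nat.fib (n j) →
        ∀ j, 1 ≤ j → j ≤ m → S ≤ n j →
          5 / 12 <
            Abar (n j) (-(∑ s ∈ Finset.Icc (j + 1) m, (-goldenφ) ^ (n s))) *
              Cbar (n j) (-(∑ s ∈ Finset.Icc (j + 1) m, (-goldenφ) ^ (n s))) /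
              (Aval (n j) * Cval (n j)) := by
  refine ⟨30, ?_⟩
  intro N m n hm hn1 hgap hN j hj1 hjm hS
  obtain ⟨hlo, hhi⟩ := eps_bounds m n j hj1 hjm hgap
  exact main_ineq (n j) hS _ hlo hhi
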